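/- arXiv:2410.11288 — 2 statements merged into one kernel-verified Lean document; each statement's English description precedes it below -/
import Mathlib

section
/- With f and g as defined (g(n) = 10^{n/5}, f as the four-piece function from the main theorem), for every integer n ≥ 7 one has f(n)/g(n) ≤ f(10)/g(10) ≤ 0.85. -/
/-- `g n = 10 ^ (n/5)` (real power). -/
noncomputable def g (n : ℕ) : ℝ := (10 : ℝ) ^ ((n : ℝ) / 5)

/-- The four-piece function `f` from the main theorem. -/
noncomputable def f (n : ℕ) : ℝ :=
  if n ≤ 8 then (n.choose 2 : ℝ)
  else if n ≤ 13 then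
    ((n / 2).choose 2 : ℝ) * (((n + 1) / 2).choose 2 : ℝ)
      - (((n / 2 : ℕ) : ℝ) - 1) * ((((n + 1) / 2 : ℕ) : ℝ) - 1) + 1
  else if n ≤ 30 then
    (10 : ℝ) ^ (((n : ℝ) - 1) / 5) + (((n : ℝ) + 144) / 30) * (6 : ℝ) ^ (((n : ℝ) - 6) / 5)
  else
    (10 : ℝ) ^ (((n : ℝ) - 1) / 5) + (((n : ℝ) - 1) / 5) * (6 : ℝ) ^ (((n : ℝ) - 6) / 5)

/-!
Write `u = 10^{1/5}` and `v = 6^{1/5}`, so that `g n = uⁿ` and `f 10 / g 10 = 85 / 100`; the claim is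
`f n ≤ 0.85 uⁿ` for `n ≥ 7`. For `7 ≤ n ≤ 13` this is a finite check using `u ≥ 1.584`. For `n ≥ 14`
both analytic pieces of `f` are at most `u^{n-1} + (n + 24)/5 · v^{n-6}`, and `(n + 24) v^{n-6} ≤ 1.7 u^{n-1}`
holds at `n = 14` and propagates since `(n + 25) v ≤ (n + 24) u`. Hence `f n ≤ 1.34 u^{n-1} ≤ 0.85 uⁿ`.
-/

noncomputable def fifthRoot (a : ℝ) : ℝ := a ^ (5⁻¹ : ℝ)

section fifthRoot

variable {a : ℝ}

lemma fifthRoot_pos (ha : 0 < a) : 0 < fifthRoot a := Real.rpow_pos_of_pos ha _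

lemma fifthRoot_pow_five (ha : 0 ≤ a) : fifthRoot a ^ 5 = a := by
  simpa [fifthRoot] using Real.rpow_inv_natCast_pow (n := 5) ha (by norm_num)

lemma rpow_natCast_div_five (ha : 0 ≤ a) (m : ℕ) : a ^ ((m : ℝ) / 5) = fifthRoot a ^ m := by
  rw [div_eq_inv_mul, Real.rpow_mul_natCast ha, fifthRoot]

lemma rpow_natCast_sub_div_five (ha : 0 ≤ a) {n k : ℕ} (hkn : k ≤ n) :
    a ^ (((n : ℝ) - k) / 5) = fifthRoot a ^ (n - k) := by
  rw [← Nat.cast_sub hkn, rpow_natCast_div_five ha]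

lemma fifthRoot_pow_eq_mod_mul_div (ha : 0 ≤ a) (n : ℕ) :
    fifthRoot a ^ n = fifthRoot a ^ (n % 5) * a ^ (n / 5) := by
  conv_lhs => rw [← Nat.mod_add_div n 5, pow_add, pow_mul, fifthRoot_pow_five ha]

end fifthRoot

lemma le_fifthRoot_ten : (1.584 : ℝ) ≤ fifthRoot 10 :=
  le_of_pow_le_pow_left₀ (n := 5) (by norm_num) (fifthRoot_pos (by norm_num)).le
    (by rw [fifthRoot_pow_five (by norm_num)]; norm_num)

lemma fifthRoot_six_le : fifthRoot 6 ≤ (1.431 : ℝ) :=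
  le_of_pow_le_pow_left₀ (n := 5) (by norm_num) (by norm_num)
    (by rw [fifthRoot_pow_five (by norm_num)]; norm_num)

lemma g_eq_fifthRoot_pow (n : ℕ) : g n = fifthRoot 10 ^ n :=
  rpow_natCast_div_five (by norm_num) n

lemma f_ten_div_g_ten : f 10 / g 10 = 0.85 := by
  rw [g_eq_fifthRoot_pow, fifthRoot_pow_eq_mod_mul_div (by norm_num)]
  norm_num [f, Nat.choose]

lemma f_le_of_le_thirteen {n : ℕ} (h7 : 7 ≤ n) (h13 : n ≤ 13) :
    f n ≤ 0.85 * fifthRoot 10 ^ n := by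
  have hlow : (1.584 : ℝ) ^ (n % 5) ≤ fifthRoot 10 ^ (n % 5) :=
    pow_le_pow_left₀ (by norm_num) le_fifthRoot_ten _
  rw [fifthRoot_pow_eq_mod_mul_div (by norm_num)]
  interval_cases n <;> norm_num [f, Nat.choose] at hlow ⊢ <;> linarith

lemma natCast_add_mul_fifthRoot_six_pow_le {n : ℕ} (hn : 14 ≤ n) :
    ((n : ℝ) + 24) * fifthRoot 6 ^ (n - 6) ≤ 1.7 * fifthRoot 10 ^ (n - 1) := by
  have hu := le_fifthRoot_ten
  have hv := fifthRoot_six_le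
  have hv0 : 0 ≤ fifthRoot 6 := (fifthRoot_pos (by norm_num)).le
  induction n, hn using Nat.le_induction with
  | base =>
    have hv8 : fifthRoot 6 ^ 8 ≤ (1.431 : ℝ) ^ 8 := pow_le_pow_left₀ hv0 hv 8
    have hu13 : (1.584 : ℝ) ^ 13 ≤ fifthRoot 10 ^ 13 := pow_le_pow_left₀ (by norm_num) hu 13
    norm_num
    linarith
  | succ n hn ih =>
    have hstep : ((n : ℝ) + 1 + 24) * fifthRoot 6 ≤ ((n : ℝ) + 24) * fifthRoot 10 := by
      nlinarith [n.cast_nonneg (α := ℝ)]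
    rw [Nat.sub_add_comm (by omega : 6 ≤ n), Nat.sub_add_comm (by omega : 1 ≤ n)]
    push_cast
    calc ((n : ℝ) + 1 + 24) * fifthRoot 6 ^ (n - 6 + 1)
        = ((n + 1 + 24) * fifthRoot 6) * fifthRoot 6 ^ (n - 6) := by ring
      _ ≤ ((n + 24) * fifthRoot 10) * fifthRoot 6 ^ (n - 6) := by gcongr
      _ = fifthRoot 10 * ((n + 24) * fifthRoot 6 ^ (n - 6)) := by ring
      _ ≤ fifthRoot 10 * (1.7 * fifthRoot 10 ^ (n - 1)) := by gcongr
      _ = 1.7 * fifthRoot 10 ^ (n - 1 + 1) := by ring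

lemma f_le_of_fourteen_le {n : ℕ} (hn : 14 ≤ n) :
    f n ≤ fifthRoot 10 ^ (n - 1) + ((n : ℝ) + 24) / 5 * fifthRoot 6 ^ (n - 6) := by
  have hn0 : (0 : ℝ) ≤ n := n.cast_nonneg
  have hv : 0 ≤ fifthRoot 6 ^ (n - 6) := pow_nonneg (fifthRoot_pos (by norm_num)).le _
  have h10 := rpow_natCast_sub_div_five (a := 10) (n := n) (k := 1) (by norm_num) (by omega)
  have h6 := rpow_natCast_sub_div_five (a := 6) (n := n) (k := 6) (by norm_num) (by omega)
  push_cast at h10 h6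
  rw [f, if_neg (by omega), if_neg (by omega), h10, h6]
  split_ifs <;> gcongr _ + ?_ * _ <;> linarith

lemma f_le_of_seven_le {n : ℕ} (hn : 7 ≤ n) : f n ≤ 0.85 * fifthRoot 10 ^ n := by
  rcases le_or_gt n 13 with h13 | h14
  · exact f_le_of_le_thirteen hn h13
  have hu0 : 0 ≤ fifthRoot 10 ^ (n - 1) := pow_nonneg (fifthRoot_pos (by norm_num)).le _
  have hv := natCast_add_mul_fifthRoot_six_pow_le h14
  calc f n ≤ fifthRoot 10 ^ (n - 1) + ((n : ℝ) + 24) / 5 * fifthRoot 6 ^ (n - 6) :=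
        f_le_of_fourteen_le h14
    _ ≤ 1.34 * fifthRoot 10 ^ (n - 1) := by linarith
    _ ≤ 0.85 * fifthRoot 10 * fifthRoot 10 ^ (n - 1) := by
        gcongr
        linarith [le_fifthRoot_ten]
    _ = 0.85 * fifthRoot 10 ^ n := by
        rw [mul_assoc, ← pow_succ', Nat.sub_add_cancel (by omega)]

theorem f_div_g_le_of_ge_seven :
    (∀ n : ℕ, 7 ≤ n → f n / g n ≤ f 10 / g 10) ∧ f 10 / g 10 ≤ 0.85 := by
  rw [f_ten_div_g_ten]
  refine ⟨fun n hn => ?_, le_rfl⟩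
  rw [g_eq_fifthRoot_pow, div_le_iff₀ (pow_pos (fifthRoot_pos (by norm_num)) n)]
  exact f_le_of_seven_le hn
end

section
/- With f and g as in the main theorem, for every integer n ≥ 14 and every r ∈ {4, 5, 6} with n - r - 2 ≥ 1: binom(r-1,2)·f(n-r) + (r-1)·f(n-r-1) + g(n-r-2) < f(n). -/
/-!
Write `A = 10^(1/5)` and `B = 6^(1/5)`. From `m = 14` on, `f m = A^(m-1) + c m * B^(m-6)` with a
nondecreasing coefficient `c`. Once all four terms of the inequality are in this regime
(`n ≥ r + 15`), the `A`-parts leave a margin of order `A^n`, while the `B`-parts of the left side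
exceed `c n * B^(n-6)` by at most a constant multiple of `c n * B^n`; since `A > 1.1 B`,
Bernoulli's inequality gives `(A/B)^e ≥ 1 + e/10`, which beats the linear growth of `c`. The
remaining eighteen pairs `(n, r)` are checked numerically from five-digit bounds on `A` and `B`.
-/

noncomputable def rootTen : ℝ := 10 ^ (1 / 5 : ℝ)

noncomputable def rootSix : ℝ := 6 ^ (1 / 5 : ℝ)

lemma rpow_sub_div_five {x : ℝ} (hx : 0 ≤ x) {m k : ℕ} (h : k ≤ m) :
    x ^ (((m : ℝ) - k) / 5) = (x ^ (1 / 5 : ℝ)) ^ (m - k) := by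
  rw [← Real.rpow_mul_natCast hx, Nat.cast_sub h]
  ring_nf

lemma pow_mem_Ioo_of_mem {x l u : ℝ} (h : x ∈ Set.Ioo l u) (hl : 0 ≤ l) {k : ℕ} (hk : k ≠ 0) :
    x ^ k ∈ Set.Ioo (l ^ k) (u ^ k) :=
  ⟨pow_lt_pow_left₀ h.1 hl hk, pow_lt_pow_left₀ h.2 (hl.trans h.1.le) hk⟩

lemma rootTen_pos : 0 < rootTen := by unfold rootTen; positivity

lemma rootSix_pos : 0 < rootSix := by unfold rootSix; positivity

lemma rootTen_pow_five : rootTen ^ 5 = 10 := by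
  simpa [rootTen] using Real.rpow_inv_natCast_pow (x := 10) (n := 5) (by norm_num) (by norm_num)

lemma rootSix_pow_five : rootSix ^ 5 = 6 := by
  simpa [rootSix] using Real.rpow_inv_natCast_pow (x := 6) (n := 5) (by norm_num) (by norm_num)

lemma rootTen_pow_add_five (k : ℕ) : rootTen ^ (k + 5) = 10 * rootTen ^ k := by
  rw [pow_add, rootTen_pow_five, mul_comm]

lemma rootSix_pow_add_five (k : ℕ) : rootSix ^ (k + 5) = 6 * rootSix ^ k := by
  rw [pow_add, rootSix_pow_five, mul_comm]

lemma g_eq (m : ℕ) : g m = rootTen ^ m := by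
  simpa [g, rootTen] using rpow_sub_div_five (x := 10) (by norm_num) (Nat.zero_le m)

lemma rootTen_mem : rootTen ∈ Set.Ioo 1.58489 1.5849 := by
  constructor
  · exact lt_of_pow_lt_pow_left₀ 5 rootTen_pos.le (by rw [rootTen_pow_five]; norm_num)
  · exact lt_of_pow_lt_pow_left₀ 5 (by norm_num) (by rw [rootTen_pow_five]; norm_num)

lemma rootSix_mem : rootSix ∈ Set.Ioo 1.43096 1.43097 := by
  constructor
  · exact lt_of_pow_lt_pow_left₀ 5 rootSix_pos.le (by rw [rootSix_pow_five]; norm_num)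
  · exact lt_of_pow_lt_pow_left₀ 5 (by norm_num) (by rw [rootSix_pow_five]; norm_num)

noncomputable def fCoeff (m : ℕ) : ℝ := if m ≤ 30 then ((m : ℝ) + 144) / 30 else ((m : ℝ) - 1) / 5

lemma f_of_le_eight {m : ℕ} (h : m ≤ 8) : f m = m.choose 2 := by
  rw [f, if_pos h]

lemma f_of_le_thirteen {m : ℕ} (h₁ : 9 ≤ m) (h₂ : m ≤ 13) :
    f m = ((m / 2).choose 2 : ℝ) * (((m + 1) / 2).choose 2 : ℝ)
      - (((m / 2 : ℕ) : ℝ) - 1) * ((((m + 1) / 2 : ℕ) : ℝ) - 1) + 1 := by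
  rw [f, if_neg (by omega), if_pos h₂]

lemma f_of_fourteen_le {m : ℕ} (h : 14 ≤ m) :
    f m = rootTen ^ (m - 1) + fCoeff m * rootSix ^ (m - 6) := by
  have h₁ := rpow_sub_div_five (x := 10) (by norm_num) (by omega : 1 ≤ m)
  have h₆ := rpow_sub_div_five (x := 6) (by norm_num) (by omega : 6 ≤ m)
  push_cast at h₁ h₆
  rw [f, if_neg (by omega), if_neg (by omega), fCoeff, rootTen, rootSix, ← h₁, ← h₆]
  split_ifs <;> rfl

lemma fCoeff_mono : Monotone fCoeff := by
  refine monotone_nat_of_le_succ fun m => ?_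
  unfold fCoeff
  split_ifs with h h'
  · push_cast; linarith
  · obtain rfl : m = 30 := by omega
    norm_num
  · omega
  · push_cast; linarith

lemma fCoeff_le {m : ℕ} (h : 18 ≤ m) : fCoeff m ≤ ((m : ℝ) + 9) / 5 := by
  have hm : (18 : ℝ) ≤ m := by exact_mod_cast h
  unfold fCoeff
  split_ifs <;> linarith

lemma one_add_div_ten_mul_rootSix_pow_le (e : ℕ) :
    (1 + (e : ℝ) / 10) * rootSix ^ e ≤ rootTen ^ e := by
  obtain ⟨-, hB⟩ := rootSix_mem
  obtain ⟨hA, -⟩ := rootTen_mem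
  have bernoulli := one_add_mul_le_pow (by norm_num : (-2 : ℝ) ≤ 1 / 10) e
  calc (1 + (e : ℝ) / 10) * rootSix ^ e ≤ (1 + 1 / 10) ^ e * rootSix ^ e :=
        mul_le_mul_of_nonneg_right (by linarith) (pow_nonneg rootSix_pos.le e)
    _ = ((11 / 10) * rootSix) ^ e := by rw [mul_pow]; norm_num
    _ ≤ rootTen ^ e := pow_le_pow_left₀ (by linarith [rootSix_pos]) (by linarith) e

/- The `A`-parts leave the margin `10 * rootTen ^ e * P` and the `B`-parts cost at most
`fCoeff (e + r + 7) * rootSix ^ e * Q`, with `P`, `Q` the two factors in `hkey`; Bernoulli's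
inequality turns `10 * rootTen ^ e` into `(10 + e) * rootSix ^ e`. -/
lemma lt_f_of_exponential_regime {a b : ℝ} {r e : ℕ} (ha : 0 ≤ a) (hb : 0 ≤ b) (he : 8 ≤ e)
    (hP : 0 ≤ rootTen ^ (r + 1) - a * rootTen - b - 1)
    (hkey : fCoeff (e + r + 7) * (a * rootSix + b - rootSix ^ (r + 1))
      < (10 + e) * (rootTen ^ (r + 1) - a * rootTen - b - 1)) :
    a * f (e + 7) + b * f (e + 6) + g (e + 5) < f (e + r + 7) := by
  rw [f_of_fourteen_le (by omega), f_of_fourteen_le (by omega), f_of_fourteen_le (by omega), g_eq,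
    show e + 7 - 1 = e + 6 by omega, show e + 7 - 6 = e + 1 by omega, show e + 6 - 1 = e + 5 by omega,
    show e + 6 - 6 = e by omega, show e + r + 7 - 1 = e + 5 + (r + 1) by omega,
    show e + r + 7 - 6 = e + (r + 1) by omega, show e + 6 = e + 5 + 1 by omega,
    pow_add rootTen (e + 5) 1, pow_add rootTen (e + 5) (r + 1), pow_add rootSix e 1,
    pow_add rootSix e (r + 1), pow_one, pow_one, pow_add rootTen e 5, rootTen_pow_five]
  set c := fCoeff (e + r + 7)
  set X := rootTen ^ e
  set Y := rootSix ^ e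
  have hY : 0 < Y := pow_pos rootSix_pos e
  have hc₁ : fCoeff (e + 7) ≤ c := fCoeff_mono (by omega)
  have hc₂ : fCoeff (e + 6) ≤ c := fCoeff_mono (by omega)
  have hXY : (10 + e) * Y ≤ 10 * X := by
    linarith [one_add_div_ten_mul_rootSix_pow_le e]
  calc a * (X * 10 * rootTen + fCoeff (e + 7) * (Y * rootSix))
        + b * (X * 10 + fCoeff (e + 6) * Y) + X * 10
      ≤ a * (X * 10 * rootTen + c * (Y * rootSix)) + b * (X * 10 + c * Y) + X * 10 := by
        gcongr
        exact (mul_pos hY rootSix_pos).le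
    _ = X * 10 * rootTen ^ (r + 1) + c * (Y * rootSix ^ (r + 1))
        - (10 * X * (rootTen ^ (r + 1) - a * rootTen - b - 1)
          - Y * (c * (a * rootSix + b - rootSix ^ (r + 1)))) := by ring
    _ < X * 10 * rootTen ^ (r + 1) + c * (Y * rootSix ^ (r + 1)) := by
        nlinarith [mul_lt_mul_of_pos_left hkey hY, mul_le_mul_of_nonneg_right hXY hP]

lemma ineq_pendant_one_of_lt {n r : ℕ} (hr : r ∈ ({4, 5, 6} : Set ℕ)) (hn : r + 14 < n) :
    ((r - 1).choose 2 : ℝ) * f (n - r) + ((r : ℝ) - 1) * f (n - r - 1) + g (n - r - 2) < f n := by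
  obtain ⟨e, rfl⟩ : ∃ e, n = e + r + 7 := ⟨n - r - 7, by omega⟩
  rw [show e + r + 7 - r = e + 7 by omega, show e + 7 - 1 = e + 6 by omega,
    show e + 7 - 2 = e + 5 by omega]
  have hc := fCoeff_le (m := e + r + 7) (by rcases hr with rfl | rfl | rfl <;> omega)
  obtain ⟨hA, hA'⟩ := rootTen_mem
  obtain ⟨hB, hB'⟩ := rootSix_mem
  have he : (8 : ℝ) ≤ e := by exact_mod_cast (by omega : 8 ≤ e)
  rcases hr with rfl | rfl | rfl
  · refine lt_f_of_exponential_regime (by norm_num) (by norm_num) (by omega) ?_ ?_ <;>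
      simp only [rootTen_pow_add_five, rootSix_pow_add_five] <;> norm_num [Nat.choose] at hc ⊢
    · linarith
    · nlinarith [mul_le_mul_of_nonneg_right hc (by linarith : (0 : ℝ) ≤ 3 * rootSix - 3)]
  · refine lt_f_of_exponential_regime (by norm_num) (by norm_num) (by omega) ?_ ?_ <;>
      simp only [rootTen_pow_add_five, rootSix_pow_add_five] <;> norm_num [Nat.choose] at hc ⊢
    · linarith
    · nlinarith
  · refine lt_f_of_exponential_regime (by norm_num) (by norm_num) (by omega) ?_ ?_ <;>
      simp only [rootTen_pow_add_five, rootSix_pow_add_five] <;> norm_num [Nat.choose] at hc ⊢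
    · nlinarith
    · have hQ : 0 ≤ 10 * rootSix + 5 - 6 * rootSix ^ 2 := by nlinarith
      have hQ' : 10 * rootSix + 5 - 6 * rootSix ^ 2 ≤ 71 / 10 := by nlinarith
      have hP : 16 / 5 ≤ 10 * rootTen ^ 2 - 10 * rootTen - 6 := by nlinarith
      nlinarith [mul_le_mul_of_nonneg_right hc hQ]

lemma ineq_pendant_one_of_le {n r : ℕ} (hr : r ∈ ({4, 5, 6} : Set ℕ)) (h₁ : 14 ≤ n) (h₂ : n ≤ r + 14) :
    ((r - 1).choose 2 : ℝ) * f (n - r) + ((r : ℝ) - 1) * f (n - r - 1) + g (n - r - 2) < f n := by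
  obtain ⟨hA₁, hA₁'⟩ := rootTen_mem
  obtain ⟨hA₂, hA₂'⟩ := pow_mem_Ioo_of_mem rootTen_mem (by norm_num) (k := 2) (by norm_num)
  obtain ⟨hA₃, hA₃'⟩ := pow_mem_Ioo_of_mem rootTen_mem (by norm_num) (k := 3) (by norm_num)
  obtain ⟨hA₄, hA₄'⟩ := pow_mem_Ioo_of_mem rootTen_mem (by norm_num) (k := 4) (by norm_num)
  obtain ⟨hB₁, hB₁'⟩ := rootSix_mem
  obtain ⟨hB₂, hB₂'⟩ := pow_mem_Ioo_of_mem rootSix_mem (by norm_num) (k := 2) (by norm_num)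
  obtain ⟨hB₃, hB₃'⟩ := pow_mem_Ioo_of_mem rootSix_mem (by norm_num) (k := 3) (by norm_num)
  obtain ⟨hB₄, hB₄'⟩ := pow_mem_Ioo_of_mem rootSix_mem (by norm_num) (k := 4) (by norm_num)
  rcases hr with rfl | rfl | rfl <;> interval_cases n <;>
    norm_num [f_of_le_eight, f_of_le_thirteen, f_of_fourteen_le, g_eq, fCoeff, rootTen_pow_add_five,
      rootSix_pow_add_five, Nat.choose] <;>
    linarith

theorem ineq_pendant_one_general (n r : ℕ) (hn : 14 ≤ n) (hr : r ∈ ({4, 5, 6} : Set ℕ)) :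
    ((r - 1).choose 2 : ℝ) * f (n - r) + ((r : ℝ) - 1) * f (n - r - 1) + g (n - r - 2)
      < f n := by
  rcases le_or_gt n (r + 14) with h | h
  · exact ineq_pendant_one_of_le hr hn h
  · exact ineq_pendant_one_of_lt hr h

theorem ineq_pendant_one (n r : ℕ) (hn : 14 ≤ n) (hr : r ∈ ({4, 5, 6} : Set ℕ))
    (h : 1 ≤ n - r - 2) :
    ((r - 1).choose 2 : ℝ) * f (n - r) + ((r : ℝ) - 1) * f (n - r - 1) + g (n - r - 2)
      < f n :=
  ineq_pendant_one_general n r hn hr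
end
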